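/- arXiv:2402.07066 — 6 statements merged into one kernel-verified Lean document; each statement's English description precedes it below -/
import Mathlib

section
/- For every positive integer k and every row index i, the sum over all columns j of C_k(i,j) equals 2^{-k}. -/
open Matrix

/-- All-ones matrix of size `2^k × 2^k`. -/
def Jmat (k : ℕ) : Matrix (Fin (2^k)) (Fin (2^k)) ℝ := Matrix.of fun _ _ => 1

/-- The recursively defined correlation matrices: `Cmat 1 = [[1,-1/2],[-1/2,1]]` and
`Cmat (k+1) = [[Cmat k, -J_k/2^(2k+1)], [-J_k/2^(2k+1), Cmat k]]`.  (`Cmat 0` is the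
`1×1` matrix `[1]`, which makes the recursion start correctly at `k = 1`.) -/
noncomputable def Cmat : (k : ℕ) → Matrix (Fin (2^k)) (Fin (2^k)) ℝ
  | 0 => Matrix.of fun _ _ => 1
  | (k+1) =>
      Matrix.reindex (finSumFinEquiv.trans (finCongr (by ring : 2^k + 2^k = 2^(k+1)))) (finSumFinEquiv.trans (finCongr (by ring : 2^k + 2^k = 2^(k+1))))
        (Matrix.fromBlocks (Cmat k) (-((1:ℝ)/2^(2*k+1)) • Jmat k)
          (-((1:ℝ)/2^(2*k+1)) • Jmat k) (Cmat k))

lemma Cmat_row_sum_aux : ∀ (k : ℕ) (i : Fin (2^k)), ∑ j : Fin (2^k), Cmat k i j = 1 / 2^k := by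
  intro k
  induction k with
  | zero => intro i; simp [Cmat]
  | succ k ih =>
    intro i
    rw [Cmat]
    set e := (finSumFinEquiv.trans (finCongr (by ring : 2^k + 2^k = 2^(k+1))))
    have hsum : ∀ x : Fin (2^k) ⊕ Fin (2^k),
        ∑ j : Fin (2^(k+1)),
          (Matrix.fromBlocks (Cmat k) (-((1:ℝ)/2^(2*k+1)) • Jmat k)
            (-((1:ℝ)/2^(2*k+1)) • Jmat k) (Cmat k)) x (e.symm j) = 1 / 2^(k+1) := by
      intro x
      rw [← Equiv.sum_comp e (fun j => _ )]
      simp only [Equiv.symm_apply_apply]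
      rw [Fintype.sum_sum_type]
      cases x with
      | inl a =>
        simp only [Matrix.fromBlocks_apply₁₁, Matrix.fromBlocks_apply₁₂, ih a, Jmat,
          Matrix.smul_apply, Matrix.of_apply, smul_eq_mul, mul_one, Finset.sum_const,
          Finset.card_univ, Fintype.card_fin, nsmul_eq_mul]
        rw [pow_succ, pow_add, pow_succ]
        push_cast
        field_simp
        ring
      | inr a =>
        simp only [Matrix.fromBlocks_apply₂₂, Matrix.fromBlocks_apply₂₁, ih a, Jmat,
          Matrix.smul_apply, Matrix.of_apply, smul_eq_mul, mul_one, Finset.sum_const,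
          Finset.card_univ, Fintype.card_fin, nsmul_eq_mul]
        rw [pow_succ, pow_add, pow_succ]
        push_cast
        field_simp
        ring
    simpa [Matrix.reindex_apply, Matrix.submatrix_apply] using hsum (e.symm i)

theorem Cmat_row_sum (k : ℕ) (hk : 1 ≤ k) (i : Fin (2^k)) :
    ∑ j : Fin (2^k), Cmat k i j = 1 / 2^k := by
  exact Cmat_row_sum_aux k i
end

section
/- For every positive integer k, the matrix C_k is positive semidefinite. -/
open Matrix

/-!
Induction on the stronger claim that `D_k = C_k - 4^{-k} J_k` is positive semidefinite
(`D_0 = 0`). Writing `a = 4^{-k}`, the off-diagonal blocks of `C_{k+1}` are `-(a/2) J_k`, and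
`C_{k+1} - (a/4) J_{k+1} = diag(D_k, D_k) + (3a/4) [[J_k, -J_k], [-J_k, J_k]]`,
where the last matrix is `v vᵀ` for `v = (1, …, 1, -1, …, -1)`. Finally
`C_k = D_k + 4^{-k} J_k` is a sum of positive semidefinite matrices.
-/

section
variable {m n R : Type*}

theorem Matrix.PosSemidef.fromBlocks_zero [Finite m] [Finite n] [Ring R] [PartialOrder R]
    [StarRing R] [StarOrderedRing R] {A : Matrix m m R} {B : Matrix n n R}
    (hA : A.PosSemidef) (hB : B.PosSemidef) : (fromBlocks A 0 0 B).PosSemidef := by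
  cases nonempty_fintype m
  cases nonempty_fintype n
  rw [posSemidef_iff_dotProduct_mulVec] at hA hB ⊢
  refine ⟨hA.1.fromBlocks (by simp) hB.1, fun x => ?_⟩
  rw [← Sum.elim_comp_inl_inr x, fromBlocks_mulVec]
  simpa [dotProduct, Fintype.sum_sum_type] using
    add_nonneg (hA.2 (x ∘ Sum.inl)) (hB.2 (x ∘ Sum.inr))

def allOnes (n : Type*) : Matrix n n ℝ := of fun _ _ => 1

theorem allOnes_eq_vecMulVec : allOnes n = vecMulVec 1 1 := by
  ext; simp [allOnes]

theorem posSemidef_allOnes [Finite n] : (allOnes n).PosSemidef := by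
  simpa [allOnes_eq_vecMulVec] using posSemidef_vecMulVec_self_star (1 : n → ℝ)

theorem allOnes_sum_self :
    allOnes (n ⊕ n) = fromBlocks (allOnes n) (allOnes n) (allOnes n) (allOnes n) := by
  ext (i | i) (j | j) <;> rfl

theorem posSemidef_fromBlocks_allOnes_neg [Finite n] :
    (fromBlocks (allOnes n) (-allOnes n) (-allOnes n) (allOnes n)).PosSemidef := by
  have h : fromBlocks (allOnes n) (-allOnes n) (-allOnes n) (allOnes n)
      = vecMulVec (Sum.elim 1 (-1)) (star (Sum.elim 1 (-1))) := by
    ext (i | i) (j | j) <;> simp [allOnes, vecMulVec_apply]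
  rw [h]
  exact posSemidef_vecMulVec_self_star _

theorem posSemidef_fromBlocks_sub_smul_allOnes [Finite n] {C : Matrix n n ℝ} {a : ℝ}
    (ha : 0 ≤ a) (hC : (C - a • allOnes n).PosSemidef) :
    (fromBlocks C (-(a / 2) • allOnes n) (-(a / 2) • allOnes n) C
      - (a / 4) • allOnes (n ⊕ n)).PosSemidef := by
  have h : fromBlocks C (-(a / 2) • allOnes n) (-(a / 2) • allOnes n) C
      - (a / 4) • allOnes (n ⊕ n) = fromBlocks (C - a • allOnes n) 0 0 (C - a • allOnes n)
      + (3 * a / 4) • fromBlocks (allOnes n) (-allOnes n) (-allOnes n) (allOnes n) := by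
    rw [sub_eq_iff_eq_add, allOnes_sum_self]
    simp only [fromBlocks_smul, fromBlocks_add]
    congr 1 <;> module
  rw [h]
  exact (hC.fromBlocks_zero hC).add (posSemidef_fromBlocks_allOnes_neg.smul (by positivity))

theorem submatrix_allOnes (f g : m → n) : (allOnes n).submatrix f g = allOnes m := rfl

theorem posSemidef_reindex_sub_smul_allOnes_iff (e : m ≃ n) (A : Matrix m m ℝ) (c : ℝ) :
    (reindex e e A - c • allOnes n).PosSemidef ↔ (A - c • allOnes m).PosSemidef :=
  posSemidef_submatrix_equiv (M := A - c • allOnes m) e.symm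

end

theorem Jmat_eq_allOnes (k : ℕ) : Jmat k = allOnes (Fin (2 ^ k)) := rfl

theorem Cmat_succ (k : ℕ) :
    Cmat (k + 1) = reindex (finSumFinEquiv.trans (finCongr (by ring)))
      (finSumFinEquiv.trans (finCongr (by ring))) (fromBlocks (Cmat k)
        (-((2 ^ (2 * k) : ℝ)⁻¹ / 2) • allOnes _) (-((2 ^ (2 * k) : ℝ)⁻¹ / 2) • allOnes _)
        (Cmat k)) := by
  have hscalar : (1 : ℝ) / 2 ^ (2 * k + 1) = (2 ^ (2 * k) : ℝ)⁻¹ / 2 := by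
    rw [pow_succ]; ring
  rw [Cmat, hscalar, Jmat_eq_allOnes]

theorem posSemidef_Cmat_sub_smul_allOnes (k : ℕ) :
    (Cmat k - (2 ^ (2 * k) : ℝ)⁻¹ • allOnes (Fin (2 ^ k))).PosSemidef := by
  induction k with
  | zero => simpa [Cmat, allOnes] using PosSemidef.zero
  | succ k ih =>
    have hscalar : (2 ^ (2 * (k + 1)) : ℝ)⁻¹ = (2 ^ (2 * k) : ℝ)⁻¹ / 4 := by
      rw [mul_add, pow_add]; ring
    rw [Cmat_succ, hscalar, posSemidef_reindex_sub_smul_allOnes_iff]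
    exact posSemidef_fromBlocks_sub_smul_allOnes (by positivity) ih

theorem Cmat_posSemidef_general (k : ℕ) : (Cmat k).PosSemidef := by
  rw [← sub_add_cancel (Cmat k) ((2 ^ (2 * k) : ℝ)⁻¹ • allOnes (Fin (2 ^ k)))]
  exact (posSemidef_Cmat_sub_smul_allOnes k).add (posSemidef_allOnes.smul (by positivity))

theorem Cmat_posSemidef (k : ℕ) (hk : 1 ≤ k) : (Cmat k).PosSemidef :=
  Cmat_posSemidef_general k
end

section
/- For every positive integer k, the inverse of C_k satisfies the recursion: C_1^{-1} = [[4/3, 2/3], [2/3, 4/3]], and C_k^{-1} = [[C_{k-1}^{-1} + (1/3)J_{k-1}, (2/3)J_{k-1}], [(2/3)J_{k-1}, C_{k-1}^{-1} + (1/3)J_{k-1}]] in block form. -/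
open Matrix

def ek (k : ℕ) : Fin (2^k) ⊕ Fin (2^k) ≃ Fin (2^(k+1)) :=
  finSumFinEquiv.trans (finCongr (by ring))

lemma Cmat_succ_s4 (k : ℕ) : Cmat (k+1) = Matrix.reindex (ek k) (ek k)
    (Matrix.fromBlocks (Cmat k) (-((1:ℝ)/2^(2*k+1)) • Jmat k)
      (-((1:ℝ)/2^(2*k+1)) • Jmat k) (Cmat k)) := rfl

lemma Jmat_succ (k : ℕ) : Jmat (k+1) = Matrix.reindex (ek k) (ek k)
    (Matrix.fromBlocks (Jmat k) (Jmat k) (Jmat k) (Jmat k)) := by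
  ext i j
  rcases h1 : (ek k).symm i with a | a <;> rcases h2 : (ek k).symm j with b | b <;>
    simp [Jmat, Matrix.reindex_apply, Matrix.submatrix_apply, h1, h2]

lemma J_mul_J (k : ℕ) : Jmat k * Jmat k = ((2:ℝ)^k) • Jmat k := by
  ext i j
  simp [Jmat, Matrix.mul_apply, Matrix.smul_apply]

lemma reindex_mul {n m : ℕ} (e : Fin n ⊕ Fin n ≃ Fin m)
    (A B : Matrix (Fin n ⊕ Fin n) (Fin n ⊕ Fin n) ℝ) :
    Matrix.reindex e e A * Matrix.reindex e e B = Matrix.reindex e e (A * B) := by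
  simp [Matrix.reindex_apply, Matrix.submatrix_mul_equiv]

lemma Jmat_zero : Jmat 0 = 1 := by
  ext i j
  simp [Jmat, Matrix.one_apply, show i = j from Fin.ext (by omega)]

lemma Cmat_zero : Cmat 0 = 1 := by
  ext i j
  simp [Cmat, Matrix.one_apply, show i = j from Fin.ext (by omega)]

lemma C_mul_J (k : ℕ) : Cmat k * Jmat k = (((1:ℝ)/2^k)) • Jmat k := by
  induction k with
  | zero => simp [Cmat_zero, Jmat_zero]
  | succ k ih =>
    rw [Cmat_succ_s4, Jmat_succ, reindex_mul, Matrix.fromBlocks_multiply]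
    have key : Cmat k * Jmat k + -((1:ℝ)/2^(2*k+1)) • Jmat k * Jmat k
        = ((1:ℝ)/2^(k+1)) • Jmat k := by
      rw [ih, Matrix.smul_mul, J_mul_J, smul_smul, ← add_smul]
      congr 1
      have h2 : (2:ℝ)^(2*k+1) = 2^k * 2^k * 2 := by ring
      field_simp [h2]
      ring
    have key2 : -((1:ℝ)/2^(2*k+1)) • Jmat k * Jmat k + Cmat k * Jmat k
        = ((1:ℝ)/2^(k+1)) • Jmat k := by rw [add_comm]; exact key
    rw [key, key2, Matrix.reindex_apply, Matrix.reindex_apply, ← Matrix.fromBlocks_smul,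
      Matrix.submatrix_smul]
    rfl

lemma Jt_transpose (k : ℕ) : (Jmat k)ᵀ = Jmat k := by ext i j; simp [Jmat]

lemma C_transpose (k : ℕ) : (Cmat k)ᵀ = Cmat k := by
  induction k with
  | zero => ext i j; simp [Cmat]
  | succ k ih =>
    rw [Cmat_succ_s4, Matrix.transpose_reindex, Matrix.fromBlocks_transpose,
      Matrix.transpose_smul, Jt_transpose, ih]

lemma J_mul_C (k : ℕ) : Jmat k * Cmat k = (((1:ℝ)/2^k)) • Jmat k := by
  have := congrArg Matrix.transpose (C_mul_J k)
  rwa [Matrix.transpose_mul, Matrix.transpose_smul, Jt_transpose k, C_transpose] at this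

lemma step (k : ℕ) (h : IsUnit (Cmat k).det) :
    Cmat (k+1) * (Matrix.reindex (ek k) (ek k)
      (Matrix.fromBlocks ((Cmat k)⁻¹ + ((1:ℝ)/3) • Jmat k) (((2:ℝ)/3) • Jmat k)
        (((2:ℝ)/3) • Jmat k) ((Cmat k)⁻¹ + ((1:ℝ)/3) • Jmat k))) = 1 := by
  have hCi : Cmat k * (Cmat k)⁻¹ = 1 := Matrix.mul_nonsing_inv _ h
  have hJCi : Jmat k * (Cmat k)⁻¹ = ((2:ℝ)^k) • Jmat k := by
    have h1 : Jmat k = ((1:ℝ)/2^k) • (Jmat k * (Cmat k)⁻¹) := by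
      calc Jmat k = (Jmat k * Cmat k) * (Cmat k)⁻¹ := by rw [mul_assoc, hCi, mul_one]
        _ = _ := by rw [J_mul_C, Matrix.smul_mul]
    calc Jmat k * (Cmat k)⁻¹
        = ((2:ℝ)^k) • (((1:ℝ)/2^k) • (Jmat k * (Cmat k)⁻¹)) := by
          rw [smul_smul]
          have : (2:ℝ)^k * ((1:ℝ)/2^k) = 1 := by
            field_simp
          rw [this, one_smul]
      _ = ((2:ℝ)^k) • Jmat k := by rw [← h1]
  rw [Cmat_succ_s4, reindex_mul, Matrix.fromBlocks_multiply]
  have h2 : (2:ℝ)^(2*k+1) = 2^k * 2^k * 2 := by ring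
  have hTL : Cmat k * ((Cmat k)⁻¹ + ((1:ℝ)/3) • Jmat k) +
      (-((1:ℝ)/2^(2*k+1)) • Jmat k) * (((2:ℝ)/3) • Jmat k) = 1 := by
    simp only [mul_add, hCi, Matrix.mul_smul, Matrix.smul_mul, C_mul_J, J_mul_J, smul_smul]
    rw [add_assoc, ← add_smul]
    rw [show (1:ℝ)/3 * ((1:ℝ)/2^k) + (2:ℝ)/3 * (-((1:ℝ)/2^(2*k+1)) * 2^k) = 0 by
      rw [h2]; field_simp; ring, zero_smul, add_zero]
  have hTR : Cmat k * (((2:ℝ)/3) • Jmat k) +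
      (-((1:ℝ)/2^(2*k+1)) • Jmat k) * ((Cmat k)⁻¹ + ((1:ℝ)/3) • Jmat k) = 0 := by
    simp only [mul_add, Matrix.mul_smul, Matrix.smul_mul, C_mul_J, J_mul_J, hJCi, smul_smul]
    rw [← add_assoc, ← add_smul, ← add_smul]
    rw [show (2:ℝ)/3 * ((1:ℝ)/2^k) + -((1:ℝ)/2^(2*k+1)) * (2:ℝ)^k
        + (1:ℝ)/3 * (-((1:ℝ)/2^(2*k+1)) * 2^k) = 0 by
      rw [h2]; field_simp; ring, zero_smul]
  have hBL : (-((1:ℝ)/2^(2*k+1)) • Jmat k) * ((Cmat k)⁻¹ + ((1:ℝ)/3) • Jmat k)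
      + Cmat k * (((2:ℝ)/3) • Jmat k) = 0 := by rw [add_comm]; exact hTR
  have hBR : (-((1:ℝ)/2^(2*k+1)) • Jmat k) * (((2:ℝ)/3) • Jmat k)
      + Cmat k * ((Cmat k)⁻¹ + ((1:ℝ)/3) • Jmat k) = 1 := by rw [add_comm]; exact hTL
  rw [hTL, hTR, hBL, hBR, Matrix.fromBlocks_one, Matrix.reindex_apply,
    Matrix.submatrix_one_equiv]

lemma Cdet_unit : ∀ k, IsUnit (Cmat k).det := by
  intro k
  induction k with
  | zero => rw [Cmat_zero]; simp
  | succ k ih => exact Matrix.isUnit_det_of_right_inverse (step k ih)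

lemma inv_formula (k : ℕ) : (Cmat (k+1))⁻¹ = Matrix.reindex (ek k) (ek k)
    (Matrix.fromBlocks ((Cmat k)⁻¹ + ((1:ℝ)/3) • Jmat k) (((2:ℝ)/3) • Jmat k)
      (((2:ℝ)/3) • Jmat k) ((Cmat k)⁻¹ + ((1:ℝ)/3) • Jmat k)) :=
  Matrix.inv_eq_right_inv (step k (Cdet_unit k))

/-- The inverse of `C_k` satisfies: `C_k` is invertible, `C_1⁻¹ = [[4/3,2/3],[2/3,4/3]]`,
and `C_{k+1}⁻¹` has the stated block form in terms of `C_k⁻¹` (for `k ≥ 1`). -/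
theorem Cmat_inv_recursion :
    (∀ k : ℕ, 1 ≤ k → IsUnit (Cmat k).det) ∧
    (∀ i j : Fin (2^1), (Cmat 1)⁻¹ i j = if i = j then 4/3 else 2/3) ∧
    (∀ k : ℕ, 1 ≤ k →
      (Cmat (k+1))⁻¹ =
        Matrix.reindex (finSumFinEquiv.trans (finCongr (by ring : 2^k + 2^k = 2^(k+1))))
          (finSumFinEquiv.trans (finCongr (by ring : 2^k + 2^k = 2^(k+1))))
          (Matrix.fromBlocks ((Cmat k)⁻¹ + ((1:ℝ)/3) • Jmat k) (((2:ℝ)/3) • Jmat k)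
            (((2:ℝ)/3) • Jmat k) ((Cmat k)⁻¹ + ((1:ℝ)/3) • Jmat k))) := by
  refine ⟨fun k _ => Cdet_unit k, ?_, fun k _ => inv_formula k⟩
  intro i j
  have h2 : (Cmat 1)⁻¹ = Matrix.reindex (ek 0) (ek 0)
      (Matrix.fromBlocks ((Cmat 0)⁻¹ + ((1:ℝ)/3) • Jmat 0) (((2:ℝ)/3) • Jmat 0)
        (((2:ℝ)/3) • Jmat 0) ((Cmat 0)⁻¹ + ((1:ℝ)/3) • Jmat 0)) := inv_formula 0
  rw [Cmat_zero] at h2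
  rw [h2]
  fin_cases i <;> fin_cases j <;>
    norm_num [ek, Jmat, Matrix.reindex_apply, Matrix.submatrix_apply, Matrix.one_apply,
      finSumFinEquiv, Matrix.fromBlocks, Equiv.symm, Equiv.trans, finCongr, Fin.cast,
      Fin.addCases, Fin.castLT, Fin.subNat, Sum.elim]
end

section
/- Let X be a centered Gaussian vector with covariance σ²C_k. The maximum over all contiguous intervals [I, I+j] of the variance Var(∑_{L=I}^{I+j} X_L) is Θ(k)·σ²; in particular it is at most Cσ²k for a universal constant C and at least (2/3)σ²·⌊(k-1)/2⌋ for odd k. -/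
open Matrix


/-!
Let `F_k(a, b)` be the sum of the entries of `C_k` over `[a, b]²`. An interval that straddles the
midpoint `2^k` of `C_{k+1}` is a suffix of the left copy of `C_k` followed by a prefix of the
right copy, so `F_{k+1}(a, b) = F_k(suffix) + F_k(prefix) - x y / 4^k`, where `x`, `y` are the
lengths of the two pieces; for the whole block this gives `F_k(0, 2^k - 1) = 1` by induction.
Since the cross term is nonnegative, prefixes and suffixes satisfy `F_k ≤ k + 1`, and any
interval `F_k ≤ 2k + 1 ≤ 3k`.

For the lower bound take the last `L_m = (4^(m+1) - 1)/3` indices of `C_{2m+1}`. The last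
`L_{m+1} = 4^(m+1) + L_m` indices of `C_{2m+3}` consist of its whole right half and the last `L_m`
indices of a copy of `C_{2m+1}`, at cross cost `L_m / 4^(m+1) < 1/3`; so `F` gains at least
`2/3` every two levels.
-/

open Finset

noncomputable def cEntry : ℕ → ℕ → ℕ → ℝ
  | 0, _, _ => 1
  | k + 1, i, j =>
    if i < 2 ^ k ∧ j < 2 ^ k then cEntry k i j
    else if 2 ^ k ≤ i ∧ 2 ^ k ≤ j then cEntry k (i - 2 ^ k) (j - 2 ^ k)
    else -(1 / 2 ^ (2 * k + 1))

section cEntry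

variable {k i j : ℕ}

lemma cEntry_succ_of_lt_of_lt (hi : i < 2 ^ k) (hj : j < 2 ^ k) :
    cEntry (k + 1) i j = cEntry k i j := by
  rw [cEntry, if_pos ⟨hi, hj⟩]

lemma cEntry_succ_add_add : cEntry (k + 1) (i + 2 ^ k) (j + 2 ^ k) = cEntry k i j := by
  rw [cEntry, if_neg (by omega), if_pos (by omega), Nat.add_sub_cancel, Nat.add_sub_cancel]

lemma cEntry_succ_of_lt_of_le (hi : i < 2 ^ k) (hj : 2 ^ k ≤ j) :
    cEntry (k + 1) i j = -(1 / 2 ^ (2 * k + 1)) := by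
  rw [cEntry, if_neg (by omega), if_neg (by omega)]

lemma cEntry_succ_of_le_of_lt (hi : 2 ^ k ≤ i) (hj : j < 2 ^ k) :
    cEntry (k + 1) i j = -(1 / 2 ^ (2 * k + 1)) := by
  rw [cEntry, if_neg (by omega), if_neg (by omega)]

lemma cEntry_self (k i : ℕ) : cEntry k i i = 1 := by
  induction k generalizing i with
  | zero => rfl
  | succ k ih =>
    rcases lt_or_ge i (2 ^ k) with h | h
    · rw [cEntry_succ_of_lt_of_lt h h, ih]
    · obtain ⟨i, rfl⟩ := Nat.exists_eq_add_of_le' h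
      rw [cEntry_succ_add_add, ih]

end cEntry

lemma Cmat_apply (k : ℕ) (i j : Fin (2 ^ k)) : Cmat k i j = cEntry k i j := by
  induction k with
  | zero => rfl
  | succ k ih =>
    set e := finSumFinEquiv.trans (finCongr (by ring : 2 ^ k + 2 ^ k = 2 ^ (k + 1)))
    obtain ⟨x, rfl⟩ := e.surjective i
    obtain ⟨y, rfl⟩ := e.surjective j
    rw [Cmat, reindex_apply, submatrix_apply, e.symm_apply_apply, e.symm_apply_apply]
    rcases x with i | i <;> rcases y with j | j <;>
      simp [e, ih, Jmat, cEntry_succ_of_lt_of_lt, cEntry_succ_add_add, cEntry_succ_of_lt_of_le,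
        cEntry_succ_of_le_of_lt]

theorem Finset.sum_sum_union_self {ι M : Type*} [DecidableEq ι] [AddCommMonoid M]
    {s t : Finset ι} (h : Disjoint s t) (f : ι → ι → M) :
    ∑ i ∈ s ∪ t, ∑ j ∈ s ∪ t, f i j =
      ∑ i ∈ s, ∑ j ∈ s, f i j + ∑ i ∈ t, ∑ j ∈ t, f i j +
        (∑ i ∈ s, ∑ j ∈ t, f i j + ∑ i ∈ t, ∑ j ∈ s, f i j) := by
  simp only [sum_union h, sum_add_distrib]
  abel

noncomputable def intervalSum (k a b : ℕ) : ℝ :=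
  ∑ i ∈ Icc a b, ∑ j ∈ Icc a b, cEntry k i j

lemma sum_Icc_Cmat_eq_intervalSum (k : ℕ) (a b : Fin (2 ^ k)) :
    ∑ i ∈ Icc a b, ∑ j ∈ Icc a b, Cmat k i j = intervalSum k a b := by
  simp only [intervalSum, ← Fin.map_valEmbedding_Icc, sum_map, Fin.valEmbedding_apply,
    Cmat_apply]

section intervalSum

variable {k a b : ℕ}

lemma intervalSum_self (k a : ℕ) : intervalSum k a a = 1 := by
  simp [intervalSum, cEntry_self]

lemma intervalSum_of_lt (h : b < a) : intervalSum k a b = 0 := by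
  simp [intervalSum, Icc_eq_empty_of_lt h]

lemma intervalSum_succ_of_lt (hb : b < 2 ^ k) : intervalSum (k + 1) a b = intervalSum k a b := by
  refine sum_congr rfl fun i hi => sum_congr rfl fun j hj => ?_
  rw [mem_Icc] at hi hj
  exact cEntry_succ_of_lt_of_lt (by omega) (by omega)

lemma intervalSum_succ_add_add :
    intervalSum (k + 1) (a + 2 ^ k) (b + 2 ^ k) = intervalSum k a b := by
  simp only [intervalSum, ← map_add_right_Icc, sum_map, addRightEmbedding_apply,
    cEntry_succ_add_add]

lemma intervalSum_succ_of_le (ha : 2 ^ k ≤ a) (hb : 2 ^ k ≤ b) :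
    intervalSum (k + 1) a b = intervalSum k (a - 2 ^ k) (b - 2 ^ k) := by
  rw [← intervalSum_succ_add_add (k := k), Nat.sub_add_cancel ha, Nat.sub_add_cancel hb]

lemma intervalSum_succ_split (ha : a < 2 ^ k) (hb : 2 ^ k ≤ b) :
    intervalSum (k + 1) a b = intervalSum k a (2 ^ k - 1) + intervalSum k 0 (b - 2 ^ k)
      - (2 ^ k - a : ℕ) * (b + 1 - 2 ^ k : ℕ) / 4 ^ k := by
  have hunion : Icc a b = Icc a (2 ^ k - 1) ∪ Icc (2 ^ k) b := by
    ext x; simp only [mem_Icc, mem_union]; omega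
  have hdisj : Disjoint (Icc a (2 ^ k - 1)) (Icc (2 ^ k) b) := by
    simp only [disjoint_left, mem_Icc]; omega
  have hleft : ∀ i ∈ Icc a (2 ^ k - 1), i < 2 ^ k := fun i hi => by rw [mem_Icc] at hi; omega
  have hright : ∀ j ∈ Icc (2 ^ k) b, 2 ^ k ≤ j := fun j hj => (mem_Icc.1 hj).1
  have hcross : ∑ i ∈ Icc a (2 ^ k - 1), ∑ j ∈ Icc (2 ^ k) b, cEntry (k + 1) i j
      + ∑ i ∈ Icc (2 ^ k) b, ∑ j ∈ Icc a (2 ^ k - 1), cEntry (k + 1) i j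
      = -((2 ^ k - a : ℕ) * (b + 1 - 2 ^ k : ℕ) / 4 ^ k) := by
    rw [sum_congr rfl fun i hi => sum_congr rfl fun j hj =>
        cEntry_succ_of_lt_of_le (hleft i hi) (hright j hj),
      sum_congr rfl fun i hi => sum_congr rfl fun j hj =>
        cEntry_succ_of_le_of_lt (hright i hi) (hleft j hj)]
    simp only [sum_const, nsmul_eq_mul, Nat.card_Icc]
    rw [show 2 ^ k - 1 + 1 - a = 2 ^ k - a by omega, pow_succ, pow_mul]
    ring
  have hright_half : intervalSum k 0 (b - 2 ^ k) = intervalSum (k + 1) (2 ^ k) b := by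
    rw [intervalSum_succ_of_le le_rfl hb, Nat.sub_self]
  rw [← intervalSum_succ_of_lt (Nat.sub_one_lt_of_lt ha), hright_half, intervalSum, hunion,
    sum_sum_union_self hdisj, hcross, intervalSum, intervalSum]
  ring

lemma intervalSum_succ_le_of_split (ha : a < 2 ^ k) (hb : 2 ^ k ≤ b) :
    intervalSum (k + 1) a b ≤ intervalSum k a (2 ^ k - 1) + intervalSum k 0 (b - 2 ^ k) := by
  rw [intervalSum_succ_split ha hb]
  linarith [show (0 : ℝ) ≤ (2 ^ k - a : ℕ) * (b + 1 - 2 ^ k : ℕ) / 4 ^ k by positivity]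

lemma intervalSum_full (k : ℕ) : intervalSum k 0 (2 ^ k - 1) = 1 := by
  induction k with
  | zero => exact intervalSum_self 0 0
  | succ k ih =>
    have hpos := Nat.two_pow_pos k
    have hk : 2 ^ (k + 1) = 2 ^ k + 2 ^ k := by rw [pow_succ]; omega
    rw [intervalSum_succ_split hpos (by omega), ih,
      show 2 ^ (k + 1) - 1 - 2 ^ k = 2 ^ k - 1 by omega, ih,
      show 2 ^ (k + 1) - 1 + 1 - 2 ^ k = 2 ^ k by omega,
      Nat.sub_zero, Nat.cast_pow, ← mul_pow]
    norm_num

lemma intervalSum_prefix_le (hb : b < 2 ^ k) : intervalSum k 0 b ≤ k + 1 := by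
  induction k generalizing b with
  | zero => rw [Nat.lt_one_iff.1 hb, intervalSum_self]; simp
  | succ k ih =>
    rcases lt_or_ge b (2 ^ k) with h | h
    · rw [intervalSum_succ_of_lt h]; push_cast; linarith [ih h]
    · have hright := ih (b := b - 2 ^ k) (by rw [pow_succ] at hb; omega)
      push_cast
      linarith [intervalSum_succ_le_of_split (Nat.two_pow_pos k) h, intervalSum_full k]

lemma intervalSum_suffix_le (ha : a < 2 ^ k) : intervalSum k a (2 ^ k - 1) ≤ k + 1 := by
  induction k generalizing a with
  | zero => rw [Nat.lt_one_iff.1 ha]; norm_num [intervalSum_self]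
  | succ k ih =>
    have hk : 2 ^ (k + 1) = 2 ^ k + 2 ^ k := by rw [pow_succ]; omega
    have hhalf : 2 ^ (k + 1) - 1 - 2 ^ k = 2 ^ k - 1 := by omega
    push_cast
    rcases lt_or_ge a (2 ^ k) with h | h
    · have hsplit := intervalSum_succ_le_of_split h (show 2 ^ k ≤ 2 ^ (k + 1) - 1 by omega)
      rw [hhalf, intervalSum_full] at hsplit
      linarith [ih h]
    · rw [intervalSum_succ_of_le h (by omega), hhalf]
      linarith [ih (a := a - 2 ^ k) (by omega)]

lemma intervalSum_le (hb : b < 2 ^ k) : intervalSum k a b ≤ 2 * k + 1 := by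
  induction k generalizing a b with
  | zero =>
    rcases Nat.eq_zero_or_pos a with rfl | ha
    · rw [Nat.lt_one_iff.1 hb, intervalSum_self]; simp
    · rw [intervalSum_of_lt (by omega)]; simp
  | succ k ih =>
    have hb' : b - 2 ^ k < 2 ^ k := by rw [pow_succ] at hb; omega
    push_cast
    rcases lt_or_ge b (2 ^ k) with hlt | hge
    · rw [intervalSum_succ_of_lt hlt]; linarith [ih (a := a) hlt]
    rcases lt_or_ge a (2 ^ k) with ha | ha
    · linarith [intervalSum_succ_le_of_split ha hge, intervalSum_suffix_le ha,
        intervalSum_prefix_le hb']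
    · rw [intervalSum_succ_of_le ha hge]
      linarith [ih (a := a - 2 ^ k) hb']

end intervalSum

def suffixLen : ℕ → ℕ
  | 0 => 1
  | m + 1 => 4 ^ (m + 1) + suffixLen m

lemma suffixLen_pos (m : ℕ) : 0 < suffixLen m := by
  cases m <;> simp [suffixLen]

lemma three_mul_suffixLen_add_one (m : ℕ) : 3 * suffixLen m + 1 = 4 ^ (m + 1) := by
  induction m with
  | zero => rfl
  | succ m ih => rw [suffixLen, pow_succ 4 (m + 1)]; omega

lemma two_thirds_mul_le_intervalSum_suffixLen (m : ℕ) :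
    (2 / 3 : ℝ) * m ≤
      intervalSum (2 * m + 1) (2 ^ (2 * m + 1) - suffixLen m) (2 ^ (2 * m + 1) - 1) := by
  induction m with
  | zero => simp [suffixLen, intervalSum_self]
  | succ m ih =>
    have hL := three_mul_suffixLen_add_one m
    have h1 : 2 ^ (2 * m + 1) = 2 * 4 ^ m := by rw [pow_succ, pow_mul]; ring
    have h2 : 2 ^ (2 * m + 2) = 4 * 4 ^ m := by rw [pow_add, pow_mul]; ring
    have h3 : 2 ^ (2 * (m + 1) + 1) = 8 * 4 ^ m := by rw [pow_succ, pow_mul]; ring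
    have h4 : 4 ^ (m + 1) = 4 * 4 ^ m := pow_succ' 4 m
    have hS : suffixLen (m + 1) = 4 * 4 ^ m + suffixLen m := by rw [suffixLen, h4]
    rw [h3, show 2 * (m + 1) + 1 = (2 * m + 2) + 1 by ring,
      intervalSum_succ_split (by omega) (by omega), h2,
      show 8 * 4 ^ m - 1 - 4 * 4 ^ m = 2 ^ (2 * m + 2) - 1 by omega, intervalSum_full,
      intervalSum_succ_of_le (by omega) (by omega),
      show 8 * 4 ^ m - suffixLen (m + 1) - 2 ^ (2 * m + 1) = 2 ^ (2 * m + 1) - suffixLen m by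
        omega,
      show 4 * 4 ^ m - 1 - 2 ^ (2 * m + 1) = 2 ^ (2 * m + 1) - 1 by omega,
      show 4 * 4 ^ m - (8 * 4 ^ m - suffixLen (m + 1)) = suffixLen m by omega,
      show 8 * 4 ^ m - 1 + 1 - 4 * 4 ^ m = 4 ^ (m + 1) by omega]
    have hcross : (suffixLen m : ℝ) * 4 ^ (m + 1) / 4 ^ (2 * m + 2) ≤ 1 / 3 := by
      have hL' : 3 * (suffixLen m : ℝ) + 1 = 4 ^ (m + 1) := by exact_mod_cast hL
      rw [show (4 : ℝ) ^ (2 * m + 2) = 4 ^ (m + 1) * 4 ^ (m + 1) by ring,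
        mul_div_mul_right _ _ (by positivity), div_le_iff₀ (by positivity)]
      linarith
    push_cast at ih ⊢
    linarith

/-- For a centered Gaussian vector with covariance `σ²C_k`, the variance of the sum over
a contiguous interval `[a,b]` of coordinates is `σ² ∑_{i,j∈[a,b]} C_k(i,j)`.  The
maximum such variance over all intervals is `Θ(k)·σ²`: there is a universal constant
`c > 0` such that every interval variance is at most `c·σ²·k`, and for odd `k` some
interval has variance at least `(2/3)·σ²·⌊(k-1)/2⌋`. -/
theorem max_interval_variance_theta :
    ∃ c : ℝ, 0 < c ∧
      ∀ (k : ℕ), 1 ≤ k → ∀ σ : ℝ,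
        (∀ a b : Fin (2^k),
          σ^2 * ∑ i ∈ Finset.Icc a b, ∑ j ∈ Finset.Icc a b, Cmat k i j ≤ c * σ^2 * k) ∧
        (Odd k →
          ∃ a b : Fin (2^k),
            (2/3) * σ^2 * (((k - 1) / 2 : ℕ) : ℝ) ≤
              σ^2 * ∑ i ∈ Finset.Icc a b, ∑ j ∈ Finset.Icc a b, Cmat k i j) := by
  refine ⟨3, by norm_num, fun k hk σ => ⟨fun a b => ?_, ?_⟩⟩
  · have hk' : (1 : ℝ) ≤ k := by exact_mod_cast hk
    rw [sum_Icc_Cmat_eq_intervalSum]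
    calc σ ^ 2 * intervalSum k a b ≤ σ ^ 2 * (2 * k + 1) :=
          mul_le_mul_of_nonneg_left (intervalSum_le b.isLt) (sq_nonneg σ)
      _ ≤ 3 * σ ^ 2 * k := by nlinarith [sq_nonneg σ]
  · rintro ⟨m, rfl⟩
    refine ⟨⟨2 ^ (2 * m + 1) - suffixLen m, Nat.sub_lt (Nat.two_pow_pos _) (suffixLen_pos m)⟩,
      ⟨2 ^ (2 * m + 1) - 1, Nat.sub_lt (Nat.two_pow_pos _) one_pos⟩, ?_⟩
    rw [sum_Icc_Cmat_eq_intervalSum, show (2 * m + 1 - 1) / 2 = m by omega]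
    calc 2 / 3 * σ ^ 2 * m = σ ^ 2 * (2 / 3 * m) := by ring
      _ ≤ _ := mul_le_mul_of_nonneg_left (two_thirds_mul_le_intervalSum_suffixLen m)
          (sq_nonneg σ)
end

section
/- Let C be an n×n positive definite covariance matrix and let M_σ(x) = x + N(0, σ²C). For any ε ∈ (0,1] and δ ∈ (0,1/2], if σ² ≥ 2‖diag(C^{-1})‖_∞ log(2/δ)/ε², then M_σ is (ε,δ)-differentially private with respect to neighboring datasets x, x' with ‖x - x'‖₁ ≤ 1 differing in one coordinate by at most 1. -/
open MeasureTheory ProbabilityTheory Matrix Real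
open scoped ENNReal NNReal

/-!
Write the mechanism as `M x z = x + σ A z` with `z` standard Gaussian. For a neighbour
`x' = x ± eᵢ` we have `M x' = M x ∘ (· + u)` with `u = σ⁻¹ A⁻¹ (x' - x)` and
`‖u‖² = C⁻¹ᵢᵢ / σ² =: w`, so by post-processing it suffices to compare the standard Gaussian
`γ` with its translate by `u`. By Cameron–Martin that translate has density
`exp (⟨u, z⟩ - w / 2)` with respect to `γ`; off the event where this density drops below `e^{-ε}`
the two measures are within a factor `e^ε`, and since `⟨u, z⟩` is Gaussian with variance `w` the
Chernoff bound gives that event mass at most `exp (-(ε - w / 2)² / (2w))`, which the hypothesis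
on `σ` makes at most `δ`.
-/

def ApproxDominated {α : Type*} [MeasurableSpace α] (ε δ : ℝ) (μ ν : Measure α) : Prop :=
  ∀ s, MeasurableSet s → μ s ≤ ENNReal.ofReal (exp ε) * ν s + ENNReal.ofReal δ

namespace ApproxDominated

variable {α β : Type*} [MeasurableSpace α] [MeasurableSpace β] {ε δ δ' : ℝ} {μ ν : Measure α}

lemma map (h : ApproxDominated ε δ μ ν) {f : α → β} (hf : Measurable f) :
    ApproxDominated ε δ (μ.map f) (ν.map f) := fun s hs => by
  simpa only [Measure.map_apply hf hs] using h _ (hf hs)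

lemma mono (h : ApproxDominated ε δ μ ν) (hδ : δ ≤ δ') : ApproxDominated ε δ' μ ν :=
  fun s hs => (h s hs).trans (by gcongr)

end ApproxDominated

lemma measure_le_mul_withDensity_add {α : Type*} [MeasurableSpace α] (μ : Measure α)
    {ρ : α → ℝ≥0∞} (hρ : Measurable ρ) (c : ℝ≥0∞) {s : Set α} (hs : MeasurableSet s) :
    μ s ≤ c * μ.withDensity ρ s + μ {x | c * ρ x < 1} := by
  set T := {x | 1 ≤ c * ρ x}
  calc μ s ≤ μ (s ∩ T) + μ (s \ T) := measure_le_inter_add_sdiff μ s T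
    _ ≤ c * μ.withDensity ρ s + μ {x | c * ρ x < 1} := by
      gcongr
      · calc μ (s ∩ T) = ∫⁻ _ in s ∩ T, 1 ∂μ := (setLIntegral_one _).symm
          _ ≤ ∫⁻ x in s ∩ T, c * ρ x ∂μ := setLIntegral_mono (hρ.const_mul c) fun x hx => hx.2
          _ ≤ ∫⁻ x in s, c * ρ x ∂μ := lintegral_mono_set Set.inter_subset_left
          _ = c * μ.withDensity ρ s := by rw [lintegral_const_mul c hρ, withDensity_apply _ hs]
      · exact fun x hx => show c * ρ x < 1 from not_le.mp hx.2

lemma gaussianReal_eq_withDensity_gaussianReal_zero (c : ℝ) {v : ℝ≥0} (hv : v ≠ 0) :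
    gaussianReal c v =
      (gaussianReal 0 v).withDensity fun s => ENNReal.ofReal (exp ((c * s - c ^ 2 / 2) / v)) := by
  rw [gaussianReal_of_var_ne_zero _ hv, gaussianReal_of_var_ne_zero _ hv,
    ← withDensity_mul _ (measurable_gaussianPDF 0 v) (by fun_prop)]
  congr 1
  funext s
  rw [Pi.mul_apply, gaussianPDF, gaussianPDF, ← ENNReal.ofReal_mul (gaussianPDFReal_nonneg _ _ _)]
  simp only [gaussianPDFReal, mul_assoc, ← exp_add]
  congr 3
  field_simp
  ring

lemma MeasureTheory.Measure.pi_withDensity {ι : Type*} [Fintype ι] {α : ι → Type*}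
    [∀ i, MeasurableSpace (α i)] {μ : ∀ i, Measure (α i)} [∀ i, IsProbabilityMeasure (μ i)]
    {f : ∀ i, α i → ℝ≥0∞}
    (hf : ∀ i, Measurable (f i)) [∀ i, SigmaFinite ((μ i).withDensity (f i))] :
    Measure.pi (fun i => (μ i).withDensity (f i)) =
      (Measure.pi μ).withDensity fun x => ∏ i, f i (x i) := by
  refine Measure.pi_eq fun s hs => ?_
  have hbox : ∀ x, (Set.univ.pi s).indicator (fun x => ∏ i, f i (x i)) x =
      ∏ i, (s i).indicator (f i) (x i) := by
    intro x
    by_cases hx : x ∈ Set.univ.pi s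
    · rw [Set.indicator_of_mem hx]
      exact Finset.prod_congr rfl fun i _ => (Set.indicator_of_mem (hx i trivial) _).symm
    · obtain ⟨i, -, hi⟩ := not_forall₂.mp hx
      rw [Set.indicator_of_notMem hx]
      exact (Finset.prod_eq_zero (Finset.mem_univ i) (Set.indicator_of_notMem hi _)).symm
  rw [withDensity_apply _ (.univ_pi hs), ← lintegral_indicator (.univ_pi hs),
    lintegral_congr hbox]
  refine (lintegral_prod_eq_prod_lintegral_of_indepFun Finset.univ
      (fun i (x : ∀ j, α j) => (s i).indicator (f i) (x i))
      (iIndepFun_pi fun i => ((hf i).indicator (hs i)).aemeasurable)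
      (fun i => ((hf i).indicator (hs i)).comp (measurable_pi_apply i))).trans
    (Finset.prod_congr rfl fun i _ => ?_)
  rw [withDensity_apply _ (hs i), ← lintegral_indicator (hs i)]
  exact (measurePreserving_eval μ i).lintegral_comp ((hf i).indicator (hs i))

section

variable {ι : Type*} [Fintype ι]

lemma pi_gaussianReal_map_add (u : ι → ℝ) :
    (Measure.pi fun _ : ι => gaussianReal 0 1).map (· + u) =
      (Measure.pi fun _ : ι => gaussianReal 0 1).withDensity
        fun z => ENNReal.ofReal (exp (∑ i, u i * z i - (∑ i, u i ^ 2) / 2)) := by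
  have hmeas : ∀ i, AEMeasurable (· + u i) (gaussianReal 0 1) := fun i => by fun_prop
  rw [show (· + u) = fun (z : ι → ℝ) i => z i + u i from rfl, Measure.pi_map_pi hmeas]
  simp_rw [gaussianReal_map_add_const, zero_add]
  rw [funext fun i => gaussianReal_eq_withDensity_gaussianReal_zero (u i) one_ne_zero,
    Measure.pi_withDensity fun i => by fun_prop]
  simp only [NNReal.coe_one, div_one]
  congr 1
  funext z
  rw [← ENNReal.ofReal_prod_of_nonneg fun i _ => (exp_pos _).le, ← exp_sum,
    Finset.sum_sub_distrib, Finset.sum_div]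

lemma hasSubgaussianMGF_id_gaussianReal (v : ℝ≥0) : HasSubgaussianMGF id v (gaussianReal 0 v) :=
  ⟨integrable_exp_mul_gaussianReal, fun t => by simp [mgf_id_gaussianReal]⟩

lemma measureReal_pi_gaussianReal_sum_mul_ge_le (u : ι → ℝ) {a : ℝ} (ha : 0 ≤ a) :
    (Measure.pi fun _ : ι => gaussianReal 0 1).real {z | a ≤ ∑ i, u i * z i} ≤
      exp (-a ^ 2 / (2 * ∑ i, u i ^ 2)) := by
  have hsubG : ∀ i ∈ Finset.univ, HasSubgaussianMGF (fun z : ι → ℝ => u i * z i)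
      (u i ^ 2).toNNReal (Measure.pi fun _ : ι => gaussianReal 0 1) := by
    intro i _
    refine HasSubgaussianMGF.of_map (Y := (Function.eval i : (ι → ℝ) → ℝ))
      (X := fun s : ℝ => u i * s) (measurable_pi_apply i).aemeasurable ?_
    rw [(measurePreserving_eval _ i).map_eq]
    convert (hasSubgaussianMGF_id_gaussianReal 1).const_mul (u i) using 1
    · rfl
    · exact NNReal.eq ((Real.coe_toNNReal _ (sq_nonneg _)).trans (mul_one _).symm)
  have := HasSubgaussianMGF.measure_sum_ge_le_of_iIndepFun
    (iIndepFun_pi (X := fun i (s : ℝ) => u i * s) fun i => by fun_prop) hsubG ha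
  simpa [sq_nonneg] using this

theorem approxDominated_pi_gaussianReal_map_add (u : ι → ℝ) {ε : ℝ}
    (hε : (∑ i, u i ^ 2) / 2 ≤ ε) :
    ApproxDominated ε (exp (-(ε - (∑ i, u i ^ 2) / 2) ^ 2 / (2 * ∑ i, u i ^ 2)))
      (Measure.pi fun _ : ι => gaussianReal 0 1)
      ((Measure.pi fun _ : ι => gaussianReal 0 1).map (· + u)) := by
  intro s hs
  rw [pi_gaussianReal_map_add]
  set w := ∑ i, u i ^ 2
  have hρ : Measurable fun z : ι → ℝ => ENNReal.ofReal (exp (∑ i, u i * z i - w / 2)) := by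
    fun_prop
  refine (measure_le_mul_withDensity_add _ hρ _ hs).trans (add_le_add le_rfl ?_)
  have hloss : {z : ι → ℝ | ENNReal.ofReal (exp ε) *
        ENNReal.ofReal (exp (∑ i, u i * z i - w / 2)) < 1} ⊆
      {z | ε - w / 2 ≤ ∑ i, -u i * z i} := by
    intro z hz
    rw [Set.mem_ofPred_eq, ← ENNReal.ofReal_mul (exp_pos ε).le, ← exp_add,
      ENNReal.ofReal_lt_one, exp_lt_one_iff] at hz
    simp only [Set.mem_ofPred_eq, neg_mul, Finset.sum_neg_distrib]
    linarith
  have htail := measureReal_pi_gaussianReal_sum_mul_ge_le (fun i => -u i) (sub_nonneg.mpr hε)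
  simp only [neg_sq] at htail
  calc _ ≤ _ := measure_mono hloss
    _ = ENNReal.ofReal ((Measure.pi fun _ : ι => gaussianReal 0 1).real _) :=
      (ofReal_measureReal (measure_ne_top _ _)).symm
    _ ≤ _ := ENNReal.ofReal_le_ofReal htail

end

lemma one_le_log_two_div {δ : ℝ} (hδ₀ : 0 < δ) (hδ : δ ≤ 1 / 2) : 1 ≤ log (2 / δ) := by
  have h4 : 4 ≤ 2 / δ := by rw [le_div_iff₀ hδ₀]; linarith
  calc (1 : ℝ) ≤ 2 * log 2 := by linarith [log_two_gt_d9]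
    _ = log 4 := by rw [show (4 : ℝ) = 2 ^ 2 by norm_num, log_pow]; norm_num
    _ ≤ log (2 / δ) := log_le_log (by norm_num) h4

lemma half_le_and_exp_le_of_two_mul_log_le {w ε δ : ℝ} (hw : 0 < w) (hε : 0 < ε ∧ ε ≤ 1)
    (hδ : 0 < δ ∧ δ ≤ 1 / 2) (h : 2 * w * log (2 / δ) ≤ ε ^ 2) :
    w / 2 ≤ ε ∧ exp (-(ε - w / 2) ^ 2 / (2 * w)) ≤ δ := by
  obtain ⟨hε₀, hε₁⟩ := hε
  have hL := one_le_log_two_div hδ.1 hδ.2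
  have hlog : log (2 / δ) = log 2 - log δ := log_div two_ne_zero hδ.1.ne'
  refine ⟨by nlinarith, ?_⟩
  rw [← exp_log hδ.1, exp_le_exp, div_le_iff₀ (by positivity)]
  nlinarith [log_two_gt_d9]

lemma inv_mulVec_dotProduct_inv_mulVec {R n : Type*} [CommRing R] [Fintype n] [DecidableEq n]
    (A : Matrix n n R) (v : n → R) :
    (A⁻¹ *ᵥ v) ⬝ᵥ (A⁻¹ *ᵥ v) = v ⬝ᵥ (A * Aᵀ)⁻¹ *ᵥ v := by
  rw [Matrix.mul_inv_rev, ← transpose_nonsing_inv, ← mulVec_mulVec, dotProduct_mulVec v,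
    vecMul_transpose]

lemma sum_sq_inv_smul_inv_mulVec {n : Type*} [Fintype n] [DecidableEq n]
    (A : Matrix n n ℝ) (σ : ℝ) (v : n → ℝ) :
    ∑ j, (σ⁻¹ • (A⁻¹ *ᵥ v)) j ^ 2 = v ⬝ᵥ (A * Aᵀ)⁻¹ *ᵥ v / σ ^ 2 := by
  rw [← inv_mulVec_dotProduct_inv_mulVec]
  simp only [Pi.smul_apply, smul_eq_mul, mul_pow, inv_pow, dotProduct, ← sq, ← Finset.mul_sum]
  ring

lemma add_add_smul_mulVec_eq_comp {K n : Type*} [Field K] [Fintype n] [DecidableEq n]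
    {σ : K} (hσ : σ ≠ 0) {A : Matrix n n K} (hA : IsUnit A.det) (x v : n → K) :
    (fun z => x + v + σ • A *ᵥ z) = (fun z => x + σ • A *ᵥ z) ∘ (· + σ⁻¹ • A⁻¹ *ᵥ v) := by
  funext z
  simp only [Function.comp_apply, mulVec_add, mulVec_smul, mulVec_mulVec,
    mul_nonsing_inv _ hA, one_mulVec, smul_add, smul_smul, mul_inv_cancel₀ hσ, one_smul]
  abel

/-- The correlated Gaussian input-perturbation mechanism `M_σ(x) = x + N(0, σ²C)`
(realized as `x + σ·A z` with `z` a standard Gaussian vector and `A Aᵀ = C`) is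
`(ε,δ)`-differentially private for neighboring datasets differing by `±e_i`, provided
`σ² ≥ 2‖diag(C⁻¹)‖_∞ log(2/δ)/ε²`. -/
theorem correlated_gaussian_mechanism_dp (n : ℕ) (C : Matrix (Fin n) (Fin n) ℝ)
    (hC : C.PosDef) (A : Matrix (Fin n) (Fin n) ℝ) (hA : A * A.transpose = C)
    (σ ε δ : ℝ) (hε : 0 < ε ∧ ε ≤ 1) (hδ : 0 < δ ∧ δ ≤ 1/2)
    (hσ : ∀ i : Fin n, 2 * |C⁻¹ i i| * Real.log (2/δ) / ε^2 ≤ σ^2) :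
    ∀ x x' : Fin n → ℝ,
      (∃ i : Fin n, x' = x + Pi.single i 1 ∨ x' = x - Pi.single i 1) →
      ∀ D : Set (Fin n → ℝ), MeasurableSet D →
        Measure.map (fun z => x + σ • A.mulVec z)
            (Measure.pi fun _ : Fin n => gaussianReal 0 1) D ≤
          ENNReal.ofReal (Real.exp ε) *
            Measure.map (fun z => x' + σ • A.mulVec z)
              (Measure.pi fun _ : Fin n => gaussianReal 0 1) D + ENNReal.ofReal δ := by
  rintro x x' ⟨i, hi⟩ D hD
  obtain ⟨s, hs, rfl⟩ : ∃ s : ℝ, s ^ 2 = 1 ∧ x' = x + Pi.single i s := by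
    rcases hi with rfl | rfl
    exacts [⟨1, one_pow 2, rfl⟩, ⟨-1, by norm_num, by rw [Pi.single_neg, sub_eq_add_neg]⟩]
  have hCii : 0 < C⁻¹ i i := hC.inv.diag_pos
  have hL : 0 < log (2 / δ) := one_pos.trans_le (one_le_log_two_div hδ.1 hδ.2)
  have hσi := hσ i
  rw [abs_of_pos hCii] at hσi
  have hσ₂ : 0 < σ ^ 2 :=
    (div_pos (mul_pos (mul_pos two_pos hCii) hL) (pow_pos hε.1 2)).trans_le hσi
  have hdetA : IsUnit A.det := by
    have hdet : A.det * A.det = C.det := by rw [← hA, det_mul, det_transpose]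
    exact isUnit_iff_ne_zero.mpr fun h => hC.det_pos.ne' (by rw [← hdet, h, mul_zero])
  set u := σ⁻¹ • A⁻¹ *ᵥ Pi.single i s
  have hw : ∑ j, u j ^ 2 = C⁻¹ i i / σ ^ 2 := by
    rw [sum_sq_inv_smul_inv_mulVec, hA]
    simp [single_dotProduct, mulVec_single, ← mul_assoc, ← sq, hs]
  obtain ⟨hεw, hδw⟩ := half_le_and_exp_le_of_two_mul_log_le (div_pos hCii hσ₂) hε hδ <| by
    rw [div_le_iff₀ (pow_pos hε.1 2)] at hσi
    calc 2 * (C⁻¹ i i / σ ^ 2) * log (2 / δ) = 2 * C⁻¹ i i * log (2 / δ) / σ ^ 2 := by ring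
      _ ≤ ε ^ 2 := by rw [div_le_iff₀ hσ₂]; linarith
  rw [← hw] at hεw hδw
  have hM : Measurable fun z => x + σ • A *ᵥ z := by fun_prop
  rw [add_add_smul_mulVec_eq_comp (pow_ne_zero_iff two_ne_zero |>.mp hσ₂.ne') hdetA,
    ← Measure.map_map hM (measurable_add_const u)]
  exact ((approxDominated_pi_gaussianReal_map_add u hεw).map hM).mono hδw D hD
end

section
/- Let X, Y, Z, W be i.i.d. N(0,1). Define X_{00} = X/4 + (√3/4)Y + (√3/4)Z + (3/4)W, X_{01} = X/4 - (√3/4)Y + (√3/4)Z - (3/4)W, X_{10} = X/4 + (√3/4)Y - (√3/4)Z - (3/4)W, X_{11} = X/4 - (√3/4)Y - (√3/4)Z + (3/4)W. Then each X_{ij} ~ N(0,1), each row sum X_{i0}+X_{i1}, each column sum X_{0j}+X_{1j}, and the total sum X_{00}+X_{01}+X_{10}+X_{11} are all N(0,1), and X_{00}+X_{10} = X/2 + (√3/2)Y while X_{01}+X_{11} = X/2 - (√3/2)Y. -/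
/-!
Independent centred Gaussians add with their variances, so a linear combination
`a X + b Y + c Z + d W` of the four independent standard Gaussians is `N(0, a² + b² + c² + d²)`.
Every variable in the statement is such a combination with unit coefficient vector: each `X_ij`
has squared coefficients `1/16 + 3/16 + 3/16 + 9/16`, the row sums are `X/2 ± (√3/2) Z`, the
column sums `X/2 ± (√3/2) Y`, and the total sum is `X` itself.
-/

open MeasureTheory ProbabilityTheory

open scoped NNReal

namespace ProbabilityTheory

variable {Ω ι : Type*} {mΩ : MeasurableSpace Ω} {μ : Measure Ω} {X : ι → Ω → ℝ}

lemma aemeasurable_of_map_eq_gaussianReal {Y : Ω → ℝ} {m : ℝ} {v : ℝ≥0}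
    (hY : μ.map Y = gaussianReal m v) : AEMeasurable Y μ :=
  AEMeasurable.of_map_ne_zero (by simp [hY, NeZero.ne])

lemma iIndepFun.map_finsetSum_eq_gaussianReal [IsProbabilityMeasure μ] (hindep : iIndepFun X μ)
    {m : ι → ℝ} {v : ι → ℝ≥0} (hX : ∀ i, μ.map (X i) = gaussianReal (m i) (v i)) (s : Finset ι) :
    μ.map (∑ i ∈ s, X i) = gaussianReal (∑ i ∈ s, m i) (∑ i ∈ s, v i) := by
  classical
  have hmeas : ∀ i, AEMeasurable (X i) μ := fun i => aemeasurable_of_map_eq_gaussianReal (hX i)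
  induction s using Finset.induction_on with
  | empty =>
    rw [Finset.sum_empty, Finset.sum_empty, Finset.sum_empty, gaussianReal_zero_var, Pi.zero_def,
      Measure.map_const, measure_univ, one_smul]
  | insert i s hi ih =>
    simp only [Finset.sum_insert hi]
    exact gaussianReal_add_gaussianReal_of_indepFun
      (hindep.indepFun_finsetSum_of_notMem₀ hmeas hi).symm (hX i) ih

lemma iIndepFun.map_sum_const_mul_eq_gaussianReal [IsProbabilityMeasure μ] [Fintype ι]
    (hindep : iIndepFun X μ) (hX : ∀ i, μ.map (X i) = gaussianReal 0 1) (a : ι → ℝ) {v : ℝ≥0}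
    (hv : (v : ℝ) = ∑ i, a i ^ 2) :
    μ.map (fun ω => ∑ i, a i * X i ω) = gaussianReal 0 v := by
  have hlaw : ∀ i, μ.map ((a i * ·) ∘ X i) = gaussianReal 0 (.mk (a i ^ 2) (sq_nonneg _)) := by
    intro i
    have hXi : HasLaw (X i) (gaussianReal 0 1) μ :=
      ⟨aemeasurable_of_map_eq_gaussianReal (hX i), hX i⟩
    exact (gaussianReal_const_mul hXi (a i)).map_eq.trans (by simp)
  have hsum := (hindep.comp (fun i x => a i * x) fun i => measurable_const_mul _)
    |>.map_finsetSum_eq_gaussianReal hlaw Finset.univ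
  simp only [Finset.sum_const_zero] at hsum
  convert hsum using 2
  · ext ω
    simp
  · ext
    simp [hv]

end ProbabilityTheory

theorem two_dim_cascade_split_general {Ω : Type*} [MeasureSpace Ω] {μ : Measure Ω}
    [IsProbabilityMeasure μ] (X Y Z W : Ω → ℝ)
    (hindep : iIndepFun ![X, Y, Z, W] μ)
    (hXg : μ.map X = gaussianReal 0 1) (hYg : μ.map Y = gaussianReal 0 1)
    (hZg : μ.map Z = gaussianReal 0 1) (hWg : μ.map W = gaussianReal 0 1) :
    let s3 : ℝ := Real.sqrt 3
    let X00 : Ω → ℝ := fun ω => X ω / 4 + (s3/4) * Y ω + (s3/4) * Z ω + (3/4) * W ω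
    let X01 : Ω → ℝ := fun ω => X ω / 4 - (s3/4) * Y ω + (s3/4) * Z ω - (3/4) * W ω
    let X10 : Ω → ℝ := fun ω => X ω / 4 + (s3/4) * Y ω - (s3/4) * Z ω - (3/4) * W ω
    let X11 : Ω → ℝ := fun ω => X ω / 4 - (s3/4) * Y ω - (s3/4) * Z ω + (3/4) * W ω
    (μ.map X00 = gaussianReal 0 1) ∧ (μ.map X01 = gaussianReal 0 1) ∧
    (μ.map X10 = gaussianReal 0 1) ∧ (μ.map X11 = gaussianReal 0 1) ∧
    (μ.map (fun ω => X00 ω + X01 ω) = gaussianReal 0 1) ∧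
    (μ.map (fun ω => X10 ω + X11 ω) = gaussianReal 0 1) ∧
    (μ.map (fun ω => X00 ω + X10 ω) = gaussianReal 0 1) ∧
    (μ.map (fun ω => X01 ω + X11 ω) = gaussianReal 0 1) ∧
    (μ.map (fun ω => X00 ω + X01 ω + X10 ω + X11 ω) = gaussianReal 0 1) ∧
    (∀ ω, X00 ω + X10 ω = X ω / 2 + (s3/2) * Y ω) ∧
    (∀ ω, X01 ω + X11 ω = X ω / 2 - (s3/2) * Y ω) := by
  intro s3 X00 X01 X10 X11
  have unit_combination (a b c d : ℝ) (hsq : a ^ 2 + b ^ 2 + c ^ 2 + d ^ 2 = 1) (f : Ω → ℝ)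
      (hf : ∀ ω, f ω = a * X ω + b * Y ω + c * Z ω + d * W ω) : μ.map f = gaussianReal 0 1 := by
    have hlaw : ∀ i, μ.map (![X, Y, Z, W] i) = gaussianReal 0 1 := by
      intro i; fin_cases i <;> assumption
    obtain rfl : f = _ := funext hf
    simpa [Fin.sum_univ_four, add_assoc] using hindep.map_sum_const_mul_eq_gaussianReal hlaw
      ![a, b, c, d] (v := 1) (by simp [Fin.sum_univ_four, hsq])
  have hs3 : s3 ^ 2 = 3 := Real.sq_sqrt (by norm_num)
  refine ⟨?_, ?_, ?_, ?_, ?_, ?_, ?_, ?_, ?_, fun ω => by simp only [X00, X10]; ring,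
    fun ω => by simp only [X01, X11]; ring⟩
  · exact unit_combination (1/4) (s3/4) (s3/4) (3/4) (by norm_num [div_pow, hs3]) _
      fun ω => by simp only [X00]; ring
  · exact unit_combination (1/4) (-s3/4) (s3/4) (-3/4) (by norm_num [div_pow, hs3]) _
      fun ω => by simp only [X01]; ring
  · exact unit_combination (1/4) (s3/4) (-s3/4) (-3/4) (by norm_num [div_pow, hs3]) _
      fun ω => by simp only [X10]; ring
  · exact unit_combination (1/4) (-s3/4) (-s3/4) (3/4) (by norm_num [div_pow, hs3]) _
      fun ω => by simp only [X11]; ring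
  · exact unit_combination (1/2) 0 (s3/2) 0 (by norm_num [div_pow, hs3]) _
      fun ω => by simp only [X00, X01]; ring
  · exact unit_combination (1/2) 0 (-s3/2) 0 (by norm_num [div_pow, hs3]) _
      fun ω => by simp only [X10, X11]; ring
  · exact unit_combination (1/2) (s3/2) 0 0 (by norm_num [div_pow, hs3]) _
      fun ω => by simp only [X00, X10]; ring
  · exact unit_combination (1/2) (-s3/2) 0 0 (by norm_num [div_pow, hs3]) _
      fun ω => by simp only [X01, X11]; ring
  · convert hXg using 2
    ext ω; simp only [X00, X01, X10, X11]; ring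

/-- Two-dimensional cascade splitting step: if `X, Y, Z, W` are i.i.d. `N(0,1)` and
`X_{ij}` are defined by the stated linear combinations, then each `X_{ij}`, each row
sum, each column sum, and the total sum are `N(0,1)`, and the column sums recover
`X/2 ± (√3/2)Y`. -/
theorem two_dim_cascade_split {Ω : Type*} [MeasureSpace Ω] {μ : Measure Ω}
    [IsProbabilityMeasure μ] (X Y Z W : Ω → ℝ)
    (hX : Measurable X) (hY : Measurable Y) (hZ : Measurable Z) (hW : Measurable W)
    (hindep : iIndepFun ![X, Y, Z, W] μ)
    (hXg : μ.map X = gaussianReal 0 1) (hYg : μ.map Y = gaussianReal 0 1)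
    (hZg : μ.map Z = gaussianReal 0 1) (hWg : μ.map W = gaussianReal 0 1) :
    let s3 : ℝ := Real.sqrt 3
    let X00 : Ω → ℝ := fun ω => X ω / 4 + (s3/4) * Y ω + (s3/4) * Z ω + (3/4) * W ω
    let X01 : Ω → ℝ := fun ω => X ω / 4 - (s3/4) * Y ω + (s3/4) * Z ω - (3/4) * W ω
    let X10 : Ω → ℝ := fun ω => X ω / 4 + (s3/4) * Y ω - (s3/4) * Z ω - (3/4) * W ω
    let X11 : Ω → ℝ := fun ω => X ω / 4 - (s3/4) * Y ω - (s3/4) * Z ω + (3/4) * W ω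
    (μ.map X00 = gaussianReal 0 1) ∧ (μ.map X01 = gaussianReal 0 1) ∧
    (μ.map X10 = gaussianReal 0 1) ∧ (μ.map X11 = gaussianReal 0 1) ∧
    (μ.map (fun ω => X00 ω + X01 ω) = gaussianReal 0 1) ∧
    (μ.map (fun ω => X10 ω + X11 ω) = gaussianReal 0 1) ∧
    (μ.map (fun ω => X00 ω + X10 ω) = gaussianReal 0 1) ∧
    (μ.map (fun ω => X01 ω + X11 ω) = gaussianReal 0 1) ∧
    (μ.map (fun ω => X00 ω + X01 ω + X10 ω + X11 ω) = gaussianReal 0 1) ∧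
    (∀ ω, X00 ω + X10 ω = X ω / 2 + (s3/2) * Y ω) ∧
    (∀ ω, X01 ω + X11 ω = X ω / 2 - (s3/2) * Y ω) :=
  two_dim_cascade_split_general X Y Z W hindep hXg hYg hZg hWg
end
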